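/- arXiv:2308.16788 — 9 statements merged into one kernel-verified Lean document; each statement's English description precedes it below -/
import Mathlib

section
/- Let A be a unital complex Banach algebra. Then the Jacobson radical of A equals the set of all x ∈ A such that the spectral radius ρ(a x) = 0 for every invertible element a of A. -/
/-!
If `x` lies in the radical, so does `a * x`, and `z - a * x = z * (1 - z⁻¹ * a * x)` is invertible
for every `z ≠ 0`, so `ρ(a * x) = 0`. Conversely, `ρ(u * x) = 0` makes `1 + u * x` invertible for
every unit `u`. Every `y` of a Banach algebra is a sum `u + v` of two units (`v` a large scalar),
and then `1 + y * x = w * (1 + w⁻¹ * v * x)` with `w = 1 + u * x`, which is invertible as well.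
-/

namespace Ideal

variable {R : Type*} [Ring R] {x : R}

theorem mem_jacobson_bot_iff_isUnit_one_add_mul :
    x ∈ jacobson (⊥ : Ideal R) ↔ ∀ y, IsUnit (1 + y * x) := by
  constructor
  · intro hx y
    have hleft : ∀ y, ∃ z, z * (1 + y * x) = 1 := fun y => by
      obtain ⟨z, hz⟩ := mem_jacobson_iff.1 hx y
      rw [mem_bot, sub_eq_zero] at hz
      exact ⟨z, by rw [mul_one_add, ← mul_assoc, add_comm, hz]⟩
    obtain ⟨z, hz⟩ := hleft y
    -- `z = 1 - z * y * x` is itself of the form `1 + y' * x`, hence has a left inverse too.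
    obtain ⟨w, hw⟩ := hleft (-(z * y))
    have hz_eq : 1 + -(z * y) * x = z := by nth_rewrite 1 [← hz]; noncomm_ring
    rw [hz_eq] at hw
    obtain rfl : w = 1 + y * x := left_inv_eq_right_inv hw hz
    exact isUnit_iff_exists.2 ⟨z, hw, hz⟩
  · intro h
    refine mem_jacobson_iff.2 fun y => ?_
    obtain ⟨u, hu⟩ := h y
    refine ⟨↑u⁻¹, ?_⟩
    rw [mem_bot, sub_eq_zero, mul_assoc, ← mul_add_one, add_comm, ← hu, Units.inv_mul]

theorem mem_jacobson_bot_of_isUnit_one_add_units_mul (hsum : ∀ y : R, ∃ u v : Rˣ, y = u + v)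
    (h : ∀ u : Rˣ, IsUnit (1 + u * x)) : x ∈ jacobson (⊥ : Ideal R) := by
  refine mem_jacobson_bot_iff_isUnit_one_add_mul.2 fun y => ?_
  obtain ⟨u, v, rfl⟩ := hsum y
  obtain ⟨w, hw⟩ := h u
  have hfactor : 1 + (↑u + ↑v) * x = w * (1 + ↑(w⁻¹ * v) * x) := by
    rw [Units.val_mul, mul_add, mul_one, ← mul_assoc, ← mul_assoc, Units.mul_inv, one_mul, hw]
    noncomm_ring
  rw [hfactor]
  exact w.isUnit.mul (h _)

end Ideal

theorem exists_units_add_eq (𝕜 : Type*) {A : Type*} [NontriviallyNormedField 𝕜] [NormedRing A]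
    [NormedAlgebra 𝕜 A] [CompleteSpace A] (y : A) : ∃ u v : Aˣ, y = u + v := by
  obtain ⟨k, hk⟩ := NormedField.exists_lt_norm 𝕜 (‖y‖ * ‖(1 : A)‖)
  have hk0 : k ≠ 0 := norm_pos_iff.1 ((by positivity : 0 ≤ ‖y‖ * ‖(1 : A)‖).trans_lt hk)
  obtain ⟨u, hu⟩ := (spectrum.mem_resolventSet_of_norm_lt_mul hk).neg
  exact ⟨u, (Units.mk0 k hk0).map (algebraMap 𝕜 A), by simp [hu]⟩

namespace spectrum

variable {𝕜 A : Type*}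

theorem subset_singleton_zero_of_mem_jacobson_bot [Field 𝕜] [Ring A] [Algebra 𝕜 A] {x : A}
    (hx : x ∈ Ideal.jacobson (⊥ : Ideal A)) : spectrum 𝕜 x ⊆ {0} := by
  intro z hz
  by_contra hz0
  apply mem_iff.1 hz
  have hfactor : algebraMap 𝕜 A z - x = algebraMap 𝕜 A z * (1 + algebraMap 𝕜 A (-z⁻¹) * x) := by
    rw [mul_add, mul_one, ← mul_assoc, ← map_mul, mul_neg, mul_inv_cancel₀ hz0, map_neg, map_one,
      neg_one_mul, sub_eq_add_neg]
  rw [hfactor]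
  exact ((isUnit_iff_ne_zero.2 hz0).map _).mul
    (Ideal.mem_jacobson_bot_iff_isUnit_one_add_mul.1 hx _)

theorem isUnit_one_add_of_subset_singleton_zero [Field 𝕜] [Ring A] [Algebra 𝕜 A] {b : A}
    (hb : spectrum 𝕜 b ⊆ {0}) : IsUnit (1 + b) := by
  have hneg_one : (-1 : 𝕜) ∉ spectrum 𝕜 b := fun h => by simpa using hb h
  rw [notMem_iff, map_neg, map_one] at hneg_one
  simpa [add_comm] using hneg_one.neg

theorem spectralRadius_eq_zero_iff [NormedField 𝕜] [Ring A] [Algebra 𝕜 A] {a : A} :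
    spectralRadius 𝕜 a = 0 ↔ spectrum 𝕜 a ⊆ {0} := by
  simp [spectralRadius, Set.subset_def]

end spectrum

/-- In a unital complex Banach algebra, the Jacobson radical coincides with the set of
elements `x` such that `ρ(a * x) = 0` for every invertible `a`. -/
theorem jacobson_radical_eq_spectralRadius_zero_on_units
    {A : Type*} [NormedRing A] [NormedAlgebra ℂ A] [CompleteSpace A] :
    ((Ideal.jacobson (⊥ : Ideal A) : Ideal A) : Set A)
      = {x : A | ∀ a : Aˣ, spectralRadius ℂ ((a : A) * x) = 0} := by
  ext x
  simp only [SetLike.mem_coe, Set.mem_ofPred_eq, spectrum.spectralRadius_eq_zero_iff]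
  constructor
  · intro hx a
    exact spectrum.subset_singleton_zero_of_mem_jacobson_bot (Ideal.mul_mem_left _ _ hx)
  · intro hx
    exact Ideal.mem_jacobson_bot_of_isUnit_one_add_units_mul (exists_units_add_eq ℂ)
      fun u => spectrum.isUnit_one_add_of_subset_singleton_zero (hx u)
end

section
/- Let X be a nonempty set and d : X × X → ℝ a nonnegative function. Suppose there exist a point c ∈ X, a bijection φ : X → X preserving d (i.e. d(φ x, φ y) = d(x, y) for all x, y), and a constant K > 1 such that (i) d(φ x, x) ≥ K · d(x, c) for every x ∈ X, and (ii) the set {d(x, c) : x ∈ X} is bounded. Then d(f(c), c) = 0 for every bijection f : X → X preserving d. -/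
/-- Vogt-type fixed point theorem for nonnegative (non-reflexive quasi-)distances:
if there is a `d`-preserving bijection `φ`, a point `c` and `K > 1` with
`d(φ x, x) ≥ K·d(x,c)` for all `x` and `x ↦ d(x,c)` bounded, then `d(f c, c) = 0`
for every `d`-preserving bijection `f`. -/
theorem dist_preserving_bijection_fixes_center
    {X : Type*} [Nonempty X] (d : X → X → ℝ)
    (hd : ∀ x y : X, 0 ≤ d x y) (c : X)
    (φ : X → X) (hφbij : Function.Bijective φ)
    (hφd : ∀ x y : X, d (φ x) (φ y) = d x y)
    (K : ℝ) (hK : 1 < K)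
    (hK' : ∀ x : X, K * d x c ≤ d (φ x) x)
    (hbdd : ∃ B : ℝ, ∀ x : X, d x c ≤ B) :
    ∀ f : X → X, Function.Bijective f → (∀ x y : X, d (f x) (f y) = d x y) →
      d (f c) c = 0 := by
  obtain ⟨B, hB⟩ := hbdd
  set S : Set ℝ :=
    {r | ∃ g : X → X, Function.Bijective g ∧ (∀ x y : X, d (g x) (g y) = d x y) ∧
      r = d (g c) c} with hS
  have hne : (d c c) ∈ S := ⟨id, Function.bijective_id, fun _ _ => rfl, rfl⟩
  have hub : BddAbove S := by
    refine ⟨B, fun r hr => ?_⟩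
    obtain ⟨g, _, _, rfl⟩ := hr
    exact hB _
  set M := sSup S with hM
  have hMnn : 0 ≤ M := le_trans (hd c c) (le_csSup hub hne)
  have key : ∀ r ∈ S, K * r ≤ M := by
    rintro r ⟨g, hgbij, hgd, rfl⟩
    set e := Equiv.ofBijective g hgbij with he
    have hge : ∀ x, g x = e x := fun x => rfl
    set g' : X → X := fun x => e.symm (φ (g x)) with hg'
    have hgg' : ∀ x, g (g' x) = φ (g x) := by
      intro x
      show e (e.symm (φ (g x))) = φ (g x)
      exact e.apply_symm_apply _
    have hg'bij : Function.Bijective g' := by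
      have : g' = e.symm ∘ φ ∘ g := rfl
      rw [this]
      exact e.symm.bijective.comp (hφbij.comp hgbij)
    have hg'd : ∀ x y : X, d (g' x) (g' y) = d x y := by
      intro x y
      have h1 : d (g (g' x)) (g (g' y)) = d (g' x) (g' y) := hgd _ _
      rw [hgg', hgg'] at h1
      rw [← h1, hφd, hgd]
    have hmem : d (g' c) c ∈ S := ⟨g', hg'bij, hg'd, rfl⟩
    have h2 : d (g' c) c = d (φ (g c)) (g c) := by
      have := hgd (g' c) c
      rw [hgg'] at this
      exact this.symm
    calc K * d (g c) c ≤ d (φ (g c)) (g c) := hK' _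
      _ = d (g' c) c := h2.symm
      _ ≤ M := le_csSup hub hmem
  have hMle : M ≤ 0 := by
    have h1 : M ≤ M / K := by
      apply csSup_le ⟨_, hne⟩
      intro r hr
      have := key r hr
      rw [le_div_iff₀ (by linarith)]
      linarith [mul_comm K r]
    by_contra h
    push_neg at h
    have := div_lt_self h hK
    linarith
  intro f hfbij hfd
  have h1 : d (f c) c ≤ M := le_csSup hub ⟨f, hfbij, hfd, rfl⟩
  have h2 : 0 ≤ d (f c) c := hd _ _
  linarith
end

section
/- Let (X, d_X) and (Y, d_Y) be sets with nonnegative functions d_X : X × X → ℝ and d_Y : Y × Y → ℝ. Let a, c ∈ X and let φ : X → X be a d_X-preserving bijection with φ ∘ φ = id and φ(c) = c. Set L = {x ∈ X : d_X(a, x) = d_X(φ(a), x) = d_X(a, c)}. Assume the set {d_X(x, c) : x ∈ L} is bounded and there is K > 1 with d_X(φ(x), x) ≥ K · d_X(x, c) for all x ∈ L. If T : X → Y is a d-preserving bijection and ψ : Y → Y is a d_Y-preserving bijection satisfying ψ(T(a)) = T(φ(a)) and ψ(T(φ(a))) = T(a), then d_Y(ψ(T(c)), T(c)) = 0. -/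
/-- The Hatori–Hirasawa–Miura–Molnár geometric tool: given nonnegative quasi-distances
`dX`, `dY`, a period-2 `dX`-preserving bijection `φ` fixing `c`, the set
`L = {x | dX a x = dX (φ a) x = dX a c}` with `{dX x c : x ∈ L}` bounded and
`dX (φ x) x ≥ K · dX x c` on `L` for some `K > 1`, any `d`-preserving bijection
`T : X → Y` and `dY`-preserving bijection `ψ : Y → Y` with `ψ (T a) = T (φ a)` and
`ψ (T (φ a)) = T a` satisfy `dY (ψ (T c)) (T c) = 0`. -/
theorem geometric_tool_inverted_jordan_triple
    {X Y : Type*} (dX : X → X → ℝ) (dY : Y → Y → ℝ)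
    (hdX : ∀ x y : X, 0 ≤ dX x y) (hdY : ∀ x y : Y, 0 ≤ dY x y)
    (a c : X)
    (φ : X → X) (hφbij : Function.Bijective φ)
    (hφd : ∀ x y : X, dX (φ x) (φ y) = dX x y)
    (hφ2 : ∀ x : X, φ (φ x) = x) (hφc : φ c = c)
    (L : Set X) (hL : L = {x : X | dX a x = dX (φ a) x ∧ dX a x = dX a c})
    (hbdd : ∃ B : ℝ, ∀ x ∈ L, dX x c ≤ B)
    (K : ℝ) (hK : 1 < K)
    (hKL : ∀ x ∈ L, K * dX x c ≤ dX (φ x) x)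
    (T : X → Y) (hTbij : Function.Bijective T)
    (hTd : ∀ x y : X, dY (T x) (T y) = dX x y)
    (ψ : Y → Y) (hψbij : Function.Bijective ψ)
    (hψd : ∀ x y : Y, dY (ψ x) (ψ y) = dY x y)
    (h1 : ψ (T a) = T (φ a)) (h2 : ψ (T (φ a)) = T a) :
    dY (ψ (T c)) (T c) = 0 := by
  classical
  set Te := Equiv.ofBijective T hTbij with hTe
  set ψe := Equiv.ofBijective ψ hψbij with hψe
  have hTeapp : ∀ x : X, Te x = T x := fun _ => rfl
  have hψeapp : ∀ y : Y, ψe y = ψ y := fun _ => rfl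
  set S : X → X := fun x => Te.symm (ψ (T x)) with hS
  set Si : X → X := fun x => Te.symm (ψe.symm (T x)) with hSi
  have hTS : ∀ x, T (S x) = ψ (T x) := by
    intro x
    show Te (Te.symm (ψ (T x))) = ψ (T x)
    exact Te.apply_symm_apply _
  have hSiS : ∀ x, Si (S x) = x := by
    intro x
    show Te.symm (ψe.symm (T (S x))) = x
    rw [hTS x]
    show Te.symm (ψe.symm (ψe (Te x))) = x
    rw [ψe.symm_apply_apply, Te.symm_apply_apply]
  have hSSi : ∀ x, S (Si x) = x := by
    intro x
    show Te.symm (ψ (T (Te.symm (ψe.symm (T x))))) = x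
    show Te.symm (ψe (Te (Te.symm (ψe.symm (Te x))))) = x
    rw [Te.apply_symm_apply, ψe.apply_symm_apply, Te.symm_apply_apply]
  -- S is dX-preserving
  have hSd : ∀ x y, dX (S x) (S y) = dX x y := by
    intro x y
    rw [← hTd (S x) (S y), hTS, hTS, hψd, hTd]
  have hSid : ∀ x y, dX (Si x) (Si y) = dX x y := by
    intro x y
    rw [← hSd (Si x) (Si y), hSSi, hSSi]
  have hTinj := hTbij.injective
  have hSa : S a = φ a := by
    apply hTinj
    rw [hTS, h1]
  have hSφa : S (φ a) = a := by
    apply hTinj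
    rw [hTS, h2]
  have hSia : Si a = φ a := by
    have h := congrArg Si hSφa
    rw [hSiS] at h; exact h.symm
  have hSiφa : Si (φ a) = a := by
    have h := congrArg Si hSa
    rw [hSiS] at h; exact h.symm
  -- membership in L
  have hmem : ∀ x, x ∈ L ↔ (dX a x = dX (φ a) x ∧ dX a x = dX a c) := by
    intro x; rw [hL]; exact Iff.rfl
  have hcL : c ∈ L := by
    rw [hmem]
    constructor
    · calc dX a c = dX (φ a) (φ c) := (hφd a c).symm
        _ = dX (φ a) c := by rw [hφc]
    · rfl
  -- φ maps L to L
  have hφL : ∀ x ∈ L, φ x ∈ L := by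
    intro x hx
    rw [hmem] at hx ⊢
    obtain ⟨h3, h4⟩ := hx
    constructor
    · calc dX a (φ x) = dX (φ a) (φ (φ x)) := by rw [← hφd, hφ2]
        _ = dX (φ a) x := by rw [hφ2]
        _ = dX a x := h3.symm
        _ = dX (φ a) (φ x) := by rw [← hφd a x]
    · calc dX a (φ x) = dX (φ a) x := by
            rw [← hφd a (φ x), hφ2]
        _ = dX a x := h3.symm
        _ = dX a c := h4
  have hSL : ∀ x ∈ L, S x ∈ L := by
    intro x hx
    rw [hmem] at hx ⊢
    obtain ⟨h3, h4⟩ := hx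
    constructor
    · calc dX a (S x) = dX (S (φ a)) (S x) := by rw [hSφa]
        _ = dX (φ a) x := hSd _ _
        _ = dX a x := h3.symm
        _ = dX (S a) (S x) := by rw [hSd]
        _ = dX (φ a) (S x) := by rw [hSa]
    · calc dX a (S x) = dX (S (φ a)) (S x) := by rw [hSφa]
        _ = dX (φ a) x := hSd _ _
        _ = dX a x := h3.symm
        _ = dX a c := h4
  have hSiL : ∀ x ∈ L, Si x ∈ L := by
    intro x hx
    rw [hmem] at hx ⊢
    obtain ⟨h3, h4⟩ := hx
    constructor
    · calc dX a (Si x) = dX (Si (φ a)) (Si x) := by rw [hSiφa]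
        _ = dX (φ a) x := hSid _ _
        _ = dX a x := h3.symm
        _ = dX (Si a) (Si x) := by rw [hSid]
        _ = dX (φ a) (Si x) := by rw [hSia]
    · calc dX a (Si x) = dX (Si (φ a)) (Si x) := by rw [hSiφa]
        _ = dX (φ a) x := hSid _ _
        _ = dX a x := h3.symm
        _ = dX a c := h4
  -- the amplification induction
  set t := dX (S c) c with ht
  have ht0 : 0 ≤ t := hdX _ _
  have hK0 : (0:ℝ) < K := lt_trans one_pos hK
  have key : ∀ n : ℕ, ∃ u : X → X,
      (∀ p q, dX (u p) (u q) = dX p q) ∧ (∀ p, u (u p) = p) ∧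
      (∀ p ∈ L, u p ∈ L) ∧ K ^ (n+1) * t ≤ dX (u c) c := by
    intro n
    induction n with
    | zero =>
      refine ⟨fun x => Si (φ (S x)), ?_, ?_, ?_, ?_⟩
      · intro p q; rw [hSid, hφd, hSd]
      · intro p
        show Si (φ (S (Si (φ (S p))))) = p
        rw [hSSi, hφ2, hSiS]
      · intro p hp; exact hSiL _ (hφL _ (hSL _ hp))
      · have hScL : S c ∈ L := hSL _ hcL
        have := hKL _ hScL
        calc K ^ (0+1) * t = K * dX (S c) c := by rw [pow_one, ht]
          _ ≤ dX (φ (S c)) (S c) := this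
          _ = dX (Si (φ (S c))) (Si (S c)) := (hSid _ _).symm
          _ = dX (Si (φ (S c))) c := by rw [hSiS]
    | succ n ih =>
      obtain ⟨u, hud, hu2, huL, hub⟩ := ih
      refine ⟨fun x => u (φ (u x)), ?_, ?_, ?_, ?_⟩
      · intro p q; rw [hud, hφd, hud]
      · intro p
        show u (φ (u (u (φ (u p))))) = p
        rw [hu2, hφ2, hu2]
      · intro p hp; exact huL _ (hφL _ (huL _ hp))
      · have hucL : u c ∈ L := huL _ hcL
        have hK' := hKL _ hucL
        calc K ^ (n+1+1) * t = K * (K ^ (n+1) * t) := by ring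
          _ ≤ K * dX (u c) c := by
              apply mul_le_mul_of_nonneg_left hub (le_of_lt hK0)
          _ ≤ dX (φ (u c)) (u c) := hK'
          _ = dX (u (φ (u c))) (u (u c)) := (hud _ _).symm
          _ = dX (u (φ (u c))) c := by rw [hu2]
  obtain ⟨B, hB⟩ := hbdd
  -- goal reduces to t = 0
  have hgoal : dY (ψ (T c)) (T c) = t := by
    rw [← hTS, hTd]
  rw [hgoal]
  by_contra hne
  have htpos : 0 < t := lt_of_le_of_ne ht0 (Ne.symm hne)
  obtain ⟨n, hn⟩ := pow_unbounded_of_one_lt (B / t) hK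
  obtain ⟨u, _, _, huL, hub⟩ := key n
  have h5 : K ^ n * t ≤ K ^ (n+1) * t := by
    apply mul_le_mul_of_nonneg_right _ ht0
    exact pow_le_pow_right₀ (le_of_lt hK) (Nat.le_succ n)
  have h6 : dX (u c) c ≤ B := hB _ (huL _ hcL)
  have h7 : B < K ^ n * t := by
    rwa [div_lt_iff₀ htpos] at hn
  linarith
end

section
/- Let X and Y be real normed spaces with dim Y ≥ 2, and let G : Y → X be a continuous map with G(0) = 0 such that the restriction of G to every closed segment [x, y] ⊆ Y not containing 0 is affine (i.e. G(t x + (1−t) y) = t G(x) + (1−t) G(y) for all t ∈ [0,1]). Then G is real-linear. -/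
/-- A continuous map `G : Y → X` between real normed spaces, with `dim Y ≥ 2`,
vanishing at the origin, and affine on every segment not containing `0`, is
real-linear. -/
theorem continuous_locally_affine_off_zero_is_linear
    {X Y : Type*} [NormedAddCommGroup X] [NormedSpace ℝ X]
    [NormedAddCommGroup Y] [NormedSpace ℝ Y]
    (hdim : 2 ≤ Module.rank ℝ Y)
    (G : Y → X) (hcont : Continuous G) (h0 : G 0 = 0)
    (hseg : ∀ x y : Y, (0 : Y) ∉ segment ℝ x y →
      ∀ t : ℝ, t ∈ Set.Icc (0 : ℝ) 1 →
        G (t • x + (1 - t) • y) = t • G x + (1 - t) • G y) :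
    IsLinearMap ℝ G := by
  -- segments [ε•x, x] avoid zero
  have hseg0 : ∀ (x : Y) (ε : ℝ), x ≠ 0 → 0 < ε → (0 : Y) ∉ segment ℝ (ε • x) x := by
    intro x ε hx hε h
    obtain ⟨a, b, ha, hb, hab, hz⟩ := h
    rw [smul_smul] at hz
    have hz' : (a * ε + b) • x = 0 := by rw [add_smul]; exact hz
    have hpos : 0 < a * ε + b := by
      rcases hb.lt_or_eq with h' | h'
      · have := mul_nonneg ha hε.le; linarith
      · have hb0 : b = 0 := h'.symm
        have ha1 : a = 1 := by linarith
        rw [hb0, ha1]; linarith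
    rcases smul_eq_zero.mp hz' with h' | h'
    · exact hpos.ne' h'
    · exact hx h'
  -- homogeneity for s ∈ [0,1]
  have hom1 : ∀ x : Y, ∀ s ∈ Set.Icc (0:ℝ) 1, G (s • x) = s • G x := by
    intro x s hs
    rcases eq_or_ne x 0 with rfl | hx
    · simp [h0]
    have ht : (1 - s) ∈ Set.Icc (0:ℝ) 1 := ⟨by linarith [hs.2], by linarith [hs.1]⟩
    have hsx : Continuous fun ε : ℝ => ε • x := continuous_id.smul continuous_const
    have hcf : Continuous fun ε : ℝ => G ((1 - s) • (ε • x) + s • x) :=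
      hcont.comp ((hsx.const_smul (1 - s)).add continuous_const)
    have l1 : Filter.Tendsto (fun ε : ℝ => G ((1 - s) • (ε • x) + s • x))
        (nhdsWithin 0 (Set.Ioi 0)) (nhds (G (s • x))) := by
      have h1 := hcf.tendsto 0
      simp only [zero_smul, smul_zero, zero_add] at h1
      exact h1.mono_left nhdsWithin_le_nhds
    have l2 : Filter.Tendsto (fun ε : ℝ => (1 - s) • G (ε • x) + s • G x)
        (nhdsWithin 0 (Set.Ioi 0)) (nhds (s • G x)) := by
      have hc2 : Continuous fun ε : ℝ => (1 - s) • G (ε • x) + s • G x :=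
        (((hcont.comp hsx).const_smul (1 - s))).add continuous_const
      have h2 := hc2.tendsto 0
      simp only [zero_smul, h0, smul_zero, zero_add] at h2
      exact h2.mono_left nhdsWithin_le_nhds
    have heq : (fun ε : ℝ => G ((1 - s) • (ε • x) + s • x))
        =ᶠ[nhdsWithin 0 (Set.Ioi 0)] (fun ε => (1 - s) • G (ε • x) + s • G x) := by
      filter_upwards [self_mem_nhdsWithin] with ε hε
      have h' := hseg (ε • x) x (hseg0 x ε hx hε) (1 - s) ht
      rw [sub_sub_cancel] at h'
      exact h'
    exact tendsto_nhds_unique (l1.congr' heq) l2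
  -- homogeneity for s ≥ 0
  have homp : ∀ (x : Y) (s : ℝ), 0 ≤ s → G (s • x) = s • G x := by
    intro x s hs
    rcases le_or_gt s 1 with h | h
    · exact hom1 x s ⟨hs, h⟩
    · have hs0 : s ≠ 0 := by linarith
      have h1 : G ((1/s) • (s • x)) = (1/s) • G (s • x) :=
        hom1 (s • x) (1/s) ⟨by positivity, by rw [div_le_one (by linarith)]; linarith⟩
      rw [smul_smul, one_div_mul_cancel hs0, one_smul] at h1
      have h2 : s • G x = s • ((1/s) • G (s • x)) := by rw [← h1]
      rw [smul_smul, mul_one_div_cancel hs0, one_smul] at h2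
      exact h2.symm
  -- additivity when the segment avoids zero
  have addseg : ∀ a b : Y, (0 : Y) ∉ segment ℝ a b → G (a + b) = G a + G b := by
    intro a b hab
    have hm := hseg a b hab (1/2) ⟨by norm_num, by norm_num⟩
    have h2 : G ((2:ℝ) • ((1/2:ℝ) • a + (1 - 1/2:ℝ) • b))
        = (2:ℝ) • G ((1/2:ℝ) • a + (1 - 1/2:ℝ) • b) := homp _ 2 (by norm_num)
    rw [hm] at h2
    have e1 : (2:ℝ) • ((1/2:ℝ) • a + (1 - 1/2:ℝ) • b) = a + b := by
      rw [smul_add, smul_smul, smul_smul]; norm_num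
    have e2 : (2:ℝ) • ((1/2:ℝ) • G a + (1 - 1/2:ℝ) • G b) = G a + G b := by
      rw [smul_add, smul_smul, smul_smul]; norm_num
    rw [e1, e2] at h2
    exact h2
  -- find a vector outside any singleton span (uses dim ≥ 2)
  have hspan : ∀ x : Y, ∃ z : Y, z ∉ Submodule.span ℝ {x} := by
    intro x
    by_contra hc
    push_neg at hc
    have htop : Submodule.span ℝ ({x} : Set Y) = ⊤ := by
      rw [Submodule.eq_top_iff']; exact hc
    have h1 : Module.rank ℝ Y ≤ 1 := by
      have h2 := rank_span_le (R := ℝ) ({x} : Set Y)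
      rw [htop] at h2
      simpa using h2
    exact absurd (hdim.trans h1) (by norm_num)
  -- oddness
  have hneg : ∀ x : Y, G (-x) = - G x := by
    intro x
    rcases eq_or_ne x 0 with rfl | hx
    · simp [h0]
    obtain ⟨z, hz⟩ := hspan x
    have hxz : (0 : Y) ∉ segment ℝ x z := by
      intro h
      obtain ⟨a, b, ha, hb, hab, hzz⟩ := h
      rcases eq_or_lt_of_le hb with hb0 | hb0
      · have ha1 : a = 1 := by linarith
        rw [← hb0, ha1, zero_smul, one_smul, add_zero] at hzz
        exact hx hzz
      · apply hz
        rw [Submodule.mem_span_singleton]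
        refine ⟨b⁻¹ * (-a), ?_⟩
        have h' : b • z = -(a • x) := by
          rw [eq_neg_iff_add_eq_zero, add_comm]; exact hzz
        rw [mul_smul, neg_smul, ← h', smul_smul, inv_mul_cancel₀ hb0.ne', one_smul]
    have hxz2 : (0 : Y) ∉ segment ℝ (x + z) (-x) := by
      intro h
      obtain ⟨a, b, ha, hb, hab, hzz⟩ := h
      rcases eq_or_lt_of_le ha with ha0 | ha0
      · have hb1 : b = 1 := by linarith
        rw [← ha0, hb1] at hzz
        simp only [zero_smul, one_smul, zero_add, neg_eq_zero] at hzz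
        exact hx hzz
      · apply hz
        rw [Submodule.mem_span_singleton]
        refine ⟨a⁻¹ * (b - a), ?_⟩
        have h' : a • z = (b - a) • x := by
          have : a • (x + z) + b • (-x) = a • z - (b - a) • x + ((b - a) • x - (b - a) • x) := by
            rw [smul_add, smul_neg, sub_smul]
            abel
          rw [hzz] at this
          have h2 : a • z - (b - a) • x = 0 := by
            rw [sub_self, add_zero] at this
            exact this.symm
          exact sub_eq_zero.mp h2
        rw [mul_smul, ← h', smul_smul, inv_mul_cancel₀ ha0.ne', one_smul]
    have e1 : G (x + z) = G x + G z := addseg x z hxz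
    have e2 : G ((x + z) + (-x)) = G (x + z) + G (-x) := addseg _ _ hxz2
    have hw : (x + z) + (-x) = z := by abel
    rw [hw, e1] at e2
    have h3 : G x + G (-x) = 0 := by
      calc G x + G (-x) = (G x + G z + G (-x)) - G z := by abel
        _ = G z - G z := by rw [← e2]
        _ = 0 := sub_self _
    exact eq_neg_of_add_eq_zero_right h3
  -- full homogeneity
  have homall : ∀ (c : ℝ) (x : Y), G (c • x) = c • G x := by
    intro c x
    rcases le_or_gt 0 c with hc | hc
    · exact homp x c hc
    · have e : c • x = (-c) • (-x) := by rw [neg_smul, smul_neg, neg_neg]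
      rw [e, homp (-x) (-c) (by linarith), hneg, smul_neg, neg_smul, neg_neg]
  -- full additivity
  have addall : ∀ x y : Y, G (x + y) = G x + G y := by
    intro x y
    rcases eq_or_ne x 0 with rfl | hx
    · simp [h0]
    rcases eq_or_ne y 0 with rfl | hy
    · simp [h0]
    by_cases hs : (0 : Y) ∈ segment ℝ x y
    · obtain ⟨a, b, ha, hb, hab, hz⟩ := hs
      have ha0 : a ≠ 0 := by
        rintro rfl
        have hb1 : b = 1 := by linarith
        rw [hb1, zero_smul, one_smul, zero_add] at hz
        exact hy hz
      have hb0 : b ≠ 0 := by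
        rintro rfl
        have ha1 : a = 1 := by linarith
        rw [ha1, zero_smul, one_smul, add_zero] at hz
        exact hx hz
      have hy' : y = (b⁻¹ * (-a)) • x := by
        have h' : b • y = -(a • x) := by
          rw [eq_neg_iff_add_eq_zero, add_comm]; exact hz
        have h'' : (b⁻¹ * (-a)) • x = y := by
          rw [mul_smul, neg_smul, ← h', smul_smul, inv_mul_cancel₀ hb0, one_smul]
        exact h''.symm
      set c : ℝ := b⁻¹ * (-a) with hc
      have hxy : x + y = (1 + c) • x := by rw [hy', add_smul, one_smul]
      rw [hxy, homall, hy', homall, add_smul, one_smul]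
    · exact addseg x y hs
  exact ⟨addall, fun c x => homall c x⟩
end

section
/- Let X be a complex Banach space and let U, V, W be surjective linear isometries of X with ‖U − V‖ < 1/2 and ‖U − W‖ = ‖V U⁻¹ V − W‖ = ‖U − V‖. Then, with K = 2 − 2‖U − V‖ > 1, the operator V + W is invertible, ‖(V + W)⁻¹‖ ≤ 1/K, and ‖V W⁻¹ V − W‖ ≥ K · ‖W − V‖. -/
/-!
Write `ε = ‖U - V‖`. Since `V + W = 2U - (U - V) - (U - W)` lies within `2ε` of `2U`, whose
inverse has norm `1/2`, the standard perturbation argument makes `V + W` invertible with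
`‖(V + W)⁻¹‖ ≤ 1/(2 - 2ε)`. The factorisation `V W⁻¹ V - W = (V - W) W⁻¹ (V + W)` then gives
`‖V - W‖ ≤ ‖V W⁻¹ V - W‖ ‖(V + W)⁻¹‖ ‖W‖`, which is the last inequality.
-/

/-- The continuous linear map underlying a surjective linear isometry. -/
noncomputable def isoToCLM {X : Type*} [NormedAddCommGroup X] [NormedSpace ℂ X]
    (e : X ≃ₗᵢ[ℂ] X) : X →L[ℂ] X :=
  e.toLinearIsometry.toContinuousLinearMap

section NormedRing

variable {R : Type*} [NormedRing R]

theorem mul_inv_mul_sub_eq_sub_mul_inv_mul_add (b : R) (c : Rˣ) :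
    b * ↑c⁻¹ * b - c = (b - c) * ↑c⁻¹ * (b + c) := by
  simp only [sub_mul, mul_add, Units.mul_inv, one_mul, mul_assoc, Units.inv_mul, mul_one]
  abel

theorem mul_norm_sub_le_norm_mul_inv_mul_sub {b : R} {c : Rˣ} {K : ℝ} (hK : 0 < K)
    (hc : ‖(c : R)‖ ≤ 1) (hunit : IsUnit (b + c)) (hinv : ‖Ring.inverse (b + c)‖ ≤ 1 / K) :
    K * ‖b - c‖ ≤ ‖b * ↑c⁻¹ * b - c‖ := by
  have hfactor : b - c = (b * ↑c⁻¹ * b - c) * Ring.inverse (b + c) * c := by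
    rw [mul_inv_mul_sub_eq_sub_mul_inv_mul_add, mul_assoc _ (b + c),
      Ring.mul_inverse_cancel _ hunit, mul_one, mul_assoc, Units.inv_mul, mul_one]
  have hbound : ‖b - c‖ ≤ ‖b * ↑c⁻¹ * b - c‖ * (1 / K) := by
    calc ‖b - c‖ ≤ ‖b * ↑c⁻¹ * b - c‖ * ‖Ring.inverse (b + c)‖ * ‖(c : R)‖ :=
          hfactor ▸ norm_mul₃_le
      _ ≤ ‖b * ↑c⁻¹ * b - c‖ * (1 / K) * 1 := by gcongr
      _ = ‖b * ↑c⁻¹ * b - c‖ * (1 / K) := mul_one _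
  rw [mul_one_div, le_div_iff₀ hK] at hbound
  linarith

variable [HasSummableGeomSeries R]

theorem isUnit_and_norm_inverse_le_of_norm_sub_le (a : Rˣ) {x : R} {C δ : ℝ}
    (hC : ‖(↑a⁻¹ : R)‖ ≤ C) (hx : ‖x - a‖ ≤ δ) (hCδ : C * δ < 1) :
    IsUnit x ∧ ‖Ring.inverse x‖ ≤ C / (1 - C * δ) := by
  obtain ⟨t, ht, rfl⟩ : ∃ t : R, ‖t‖ ≤ C * δ ∧ x = a * (1 - t) := by
    refine ⟨↑a⁻¹ * (a - x), ?_, ?_⟩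
    · calc ‖↑a⁻¹ * (a - x)‖ ≤ ‖(↑a⁻¹ : R)‖ * ‖(a : R) - x‖ := norm_mul_le _ _
        _ ≤ C * δ :=
          mul_le_mul hC (norm_sub_rev x a ▸ hx) (norm_nonneg _) ((norm_nonneg _).trans hC)
    · rw [mul_sub, mul_one, ← mul_assoc, Units.mul_inv, one_mul, sub_sub_cancel]
  have hunit : IsUnit (a * (1 - t)) := by
    simpa using a.isUnit.mul (Units.oneSub t (ht.trans_lt hCδ)).isUnit
  refine ⟨hunit, ?_⟩
  set y := Ring.inverse (a * (1 - t))
  -- `y` is a fixed point of `z ↦ a⁻¹ + t z`, a contraction of ratio `C δ`.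
  have hy : y = ↑a⁻¹ + t * y := by
    have h : (1 - t) * y = ↑a⁻¹ :=
      calc (1 - t) * y = ↑a⁻¹ * (a * (1 - t) * y) := by
            rw [← mul_assoc, ← mul_assoc, Units.inv_mul, one_mul]
        _ = ↑a⁻¹ := by rw [Ring.mul_inverse_cancel _ hunit, mul_one]
    rw [← h, sub_mul, one_mul, sub_add_cancel]
  have hy_le : ‖y‖ ≤ C + C * δ * ‖y‖ := by
    calc ‖y‖ = ‖↑a⁻¹ + t * y‖ := congrArg norm hy
      _ ≤ ‖(↑a⁻¹ : R)‖ + ‖t‖ * ‖y‖ := (norm_add_le _ _).trans (by gcongr; exact norm_mul_le _ _)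
      _ ≤ C + C * δ * ‖y‖ := by gcongr
  rw [le_div_iff₀ (by linarith)]
  linarith

theorem isUnit_add_and_norm_inverse_le [NormedAlgebra ℝ R] (u : Rˣ) (hu : ‖(↑u⁻¹ : R)‖ ≤ 1)
    {x y : R} {ε : ℝ} (hx : ‖(u : R) - x‖ ≤ ε) (hy : ‖(u : R) - y‖ ≤ ε) (hε : ε < 1) :
    IsUnit (x + y) ∧ ‖Ring.inverse (x + y)‖ ≤ 1 / (2 - 2 * ε) := by
  set a : Rˣ := Units.mk0 (2 : ℝ) two_ne_zero • u
  have ha_inv : ‖(↑a⁻¹ : R)‖ ≤ 1 / 2 := by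
    rw [Units.smul_inv, Units.val_smul, Units.smul_def, norm_smul]
    simpa using hu
  have hxy : ‖x + y - a‖ ≤ 2 * ε := by
    calc ‖x + y - a‖ = ‖((u : R) - x) + ((u : R) - y)‖ := by
          rw [← norm_neg, Units.val_smul, Units.smul_def]
          simp only [Units.val_mk0, two_smul]
          abel_nf
      _ ≤ 2 * ε := (norm_add_le _ _).trans (by linarith)
  have h := isUnit_and_norm_inverse_le_of_norm_sub_le a ha_inv hxy (by linarith)
  convert h using 2
  field_simp

end NormedRing

section Isometry

variable {X : Type*} [NormedAddCommGroup X] [NormedSpace ℂ X]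

noncomputable def isoToUnit (e : X ≃ₗᵢ[ℂ] X) : (X →L[ℂ] X)ˣ :=
  e.toContinuousLinearEquiv.toUnit

theorem val_isoToUnit (e : X ≃ₗᵢ[ℂ] X) : (isoToUnit e : X →L[ℂ] X) = isoToCLM e := rfl

theorem val_inv_isoToUnit (e : X ≃ₗᵢ[ℂ] X) : (↑(isoToUnit e)⁻¹ : X →L[ℂ] X) = isoToCLM e.symm :=
  rfl

theorem norm_isoToCLM_le (e : X ≃ₗᵢ[ℂ] X) : ‖isoToCLM e‖ ≤ 1 :=
  e.toLinearIsometry.norm_toContinuousLinearMap_le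

theorem isoToCLM_trans (e f : X ≃ₗᵢ[ℂ] X) :
    isoToCLM (e.trans f) = isoToCLM f * isoToCLM e := rfl

end Isometry

theorem isometry_group_property_B_general
    {X : Type*} [NormedAddCommGroup X] [NormedSpace ℂ X] [CompleteSpace X]
    (U V W : X ≃ₗᵢ[ℂ] X)
    (hUV : ‖isoToCLM U - isoToCLM V‖ < 1 / 2)
    (hUW : ‖isoToCLM U - isoToCLM W‖ = ‖isoToCLM U - isoToCLM V‖) :
    1 < 2 - 2 * ‖isoToCLM U - isoToCLM V‖ ∧
    IsUnit (isoToCLM V + isoToCLM W) ∧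
    ‖Ring.inverse (isoToCLM V + isoToCLM W)‖ ≤ 1 / (2 - 2 * ‖isoToCLM U - isoToCLM V‖) ∧
    (2 - 2 * ‖isoToCLM U - isoToCLM V‖) * ‖isoToCLM W - isoToCLM V‖
      ≤ ‖isoToCLM ((V.trans W.symm).trans V) - isoToCLM W‖ := by
  have hK : 1 < 2 - 2 * ‖isoToCLM U - isoToCLM V‖ := by linarith
  obtain ⟨hunit, hinv⟩ := isUnit_add_and_norm_inverse_le (isoToUnit U) (norm_isoToCLM_le U.symm)
    (ε := ‖isoToCLM U - isoToCLM V‖) le_rfl hUW.le (by linarith)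
  refine ⟨hK, hunit, hinv, ?_⟩
  rw [norm_sub_rev (isoToCLM W), isoToCLM_trans, isoToCLM_trans, ← mul_assoc,
    ← val_inv_isoToUnit, ← val_isoToUnit W]
  rw [← val_isoToUnit W] at hunit hinv
  exact mul_norm_sub_le_norm_mul_inv_mul_sub (by linarith) (norm_isoToCLM_le W) hunit hinv

/-- Property `B(U,V)` for the group of surjective linear isometries of a complex Banach
space: if `‖U − V‖ < 1/2` and `W` satisfies `‖U − W‖ = ‖V U⁻¹ V − W‖ = ‖U − V‖`, then
with `K = 2 − 2‖U − V‖ > 1` the operator `V + W` is invertible, `‖(V+W)⁻¹‖ ≤ 1/K`, and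
`‖V W⁻¹ V − W‖ ≥ K ‖W − V‖`. -/
theorem isometry_group_property_B
    {X : Type*} [NormedAddCommGroup X] [NormedSpace ℂ X] [CompleteSpace X]
    (U V W : X ≃ₗᵢ[ℂ] X)
    (hUV : ‖isoToCLM U - isoToCLM V‖ < 1 / 2)
    (hUW : ‖isoToCLM U - isoToCLM W‖ = ‖isoToCLM U - isoToCLM V‖)
    (hVUV : ‖isoToCLM ((V.trans U.symm).trans V) - isoToCLM W‖
      = ‖isoToCLM U - isoToCLM V‖) :
    1 < 2 - 2 * ‖isoToCLM U - isoToCLM V‖ ∧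
    IsUnit (isoToCLM V + isoToCLM W) ∧
    ‖Ring.inverse (isoToCLM V + isoToCLM W)‖ ≤ 1 / (2 - 2 * ‖isoToCLM U - isoToCLM V‖) ∧
    (2 - 2 * ‖isoToCLM U - isoToCLM V‖) * ‖isoToCLM W - isoToCLM V‖
      ≤ ‖isoToCLM ((V.trans W.symm).trans V) - isoToCLM W‖ :=
  isometry_group_property_B_general U V W hUV hUW
end

section
/- Let A be a unital C*-algebra and a, b positive invertible elements of A. Then the Thompson metric satisfies d_T(a, b) = ‖log(a^{-1/2} b a^{-1/2})‖. -/
/-- `M(x/y) = inf {β > 0 : x ≤ β y}`. -/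
noncomputable def Mrel {A : Type*} [NormedRing A] [NormedAlgebra ℂ A]
    [PartialOrder A] (x y : A) : ℝ :=
  sInf {β : ℝ | 0 < β ∧ x ≤ β • y}

/-- The Thompson metric `d_T(x,y) = log (max {M(x/y), M(y/x)})`. -/
noncomputable def thompsonDist {A : Type*} [NormedRing A] [NormedAlgebra ℂ A]
    [PartialOrder A] (x y : A) : ℝ :=
  Real.log (max (Mrel x y) (Mrel y x))

/-- The inverse square root `x^{-1/2}` via the continuous functional calculus. -/
noncomputable def invSqrt {A : Type*} [CStarAlgebra A] (x : A) : A :=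
  cfc (fun t : ℝ => (Real.sqrt t)⁻¹) x

/-!
Conjugation `x ↦ s x s` by the self-adjoint unit `s = a^{-1/2}` is an order automorphism commuting
with real scalars, so it preserves `M(·/·)` and hence `d_T`; it sends `a` to `1` and `b` to
`c = a^{-1/2} b a^{-1/2}`. If `m` and `M` are the least and greatest points of the spectrum of the
strictly positive element `c`, then `c ≤ β` iff `M ≤ β` and `1 ≤ β c` iff `m⁻¹ ≤ β`, so
`d_T(1, c) = log (max m⁻¹ M)`, which is the largest value of `|log|` on the spectrum, i.e. `‖log c‖`.
-/

open Real

lemma sInf_setOf_pos_and_le {M : ℝ} (hM : 0 < M) : sInf {β : ℝ | 0 < β ∧ M ≤ β} = M := by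
  have h : {β : ℝ | 0 < β ∧ M ≤ β} = Set.Ici M := by
    ext β
    exact ⟨fun h => h.2, fun h => ⟨hM.trans_le h, h⟩⟩
  rw [h, csInf_Ici]

lemma isGreatest_image_abs_log {K : Set ℝ} (hK : IsCompact K) (hne : K.Nonempty)
    (hpos : ∀ t ∈ K, 0 < t) :
    IsGreatest ((fun t => |log t|) '' K) (log (max (sInf K)⁻¹ (sSup K))) := by
  have hm : sInf K ∈ K := hK.sInf_mem hne
  have hM : sSup K ∈ K := hK.sSup_mem hne
  rw [Real.strictMonoOn_log.monotoneOn.map_max (inv_pos.2 (hpos _ hm)) (hpos _ hM), Real.log_inv]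
  have upper : ∀ t ∈ K, |log t| ≤ max (-log (sInf K)) (log (sSup K)) := fun t ht =>
    abs_le.2 ⟨by linarith [le_max_left (-log (sInf K)) (log (sSup K)),
        log_le_log (hpos _ hm) (csInf_le hK.bddBelow ht)],
      (log_le_log (hpos t ht) (le_csSup hK.bddAbove ht)).trans (le_max_right _ _)⟩
  refine ⟨?_, Set.forall_mem_image.2 upper⟩
  rcases max_choice (-log (sInf K)) (log (sSup K)) with h | h
  · exact ⟨sInf K, hm, (upper _ hm).antisymm (by rw [h]; exact neg_le_abs _)⟩
  · exact ⟨sSup K, hM, (upper _ hM).antisymm (by rw [h]; exact le_abs_self _)⟩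

lemma IsSelfAdjoint.conjugate_le_conjugate_iff {R : Type*} [Ring R] [StarRing R] [PartialOrder R]
    [StarOrderedRing R] {s : R} (hs : IsSelfAdjoint s)
    (hu : IsUnit s) {x y : R} : s * x * s ≤ s * y * s ↔ x ≤ y := by
  rw [← sub_nonneg, ← sub_nonneg (a := y), ← sub_mul, ← mul_sub]
  simpa only [hs.star_eq] using hu.star_left_conjugate_nonneg_iff

lemma Mrel_of_subsingleton {A : Type*} [NormedRing A] [NormedAlgebra ℂ A] [PartialOrder A]
    [Subsingleton A] (x y : A) : Mrel x y = 0 := by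
  have h : {β : ℝ | 0 < β ∧ x ≤ β • y} = Set.Ioi 0 := by
    ext β
    simp [Subsingleton.elim x (β • y)]
  rw [Mrel, h, csInf_Ioi]

section CStarAlgebra

variable {A : Type*} [CStarAlgebra A] [PartialOrder A] [StarOrderedRing A]

lemma invSqrt_eq_ringInverse_sqrt {a : A} (ha : IsStrictlyPositive a) :
    invSqrt a = Ring.inverse (CFC.sqrt a) := by
  rw [invSqrt, cfc_inv _ _ fun t ht => (Real.sqrt_pos.2 (ha.spectrum_pos ht)).ne',
    CFC.sqrt_eq_real_sqrt a ha.nonneg, cfcₙ_eq_cfc]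

lemma IsStrictlyPositive.invSqrt {a : A} (ha : IsStrictlyPositive a) :
    IsStrictlyPositive (invSqrt a) := by
  rw [invSqrt_eq_ringInverse_sqrt ha]
  exact ha.sqrt.ringInverse

lemma invSqrt_mul_self_mul_invSqrt {a : A} (ha : IsStrictlyPositive a) :
    invSqrt a * a * invSqrt a = 1 := by
  have hr := ha.sqrt.isUnit
  calc invSqrt a * a * invSqrt a
      = Ring.inverse (CFC.sqrt a) * (CFC.sqrt a * CFC.sqrt a) * Ring.inverse (CFC.sqrt a) := by
        rw [invSqrt_eq_ringInverse_sqrt ha, CFC.sqrt_mul_sqrt_self a ha.nonneg]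
    _ = (Ring.inverse (CFC.sqrt a) * CFC.sqrt a) * (CFC.sqrt a * Ring.inverse (CFC.sqrt a)) := by
        simp only [mul_assoc]
    _ = 1 := by rw [Ring.inverse_mul_cancel _ hr, Ring.mul_inverse_cancel _ hr, one_mul]

lemma Mrel_conjugate {s : A} (hs : IsSelfAdjoint s) (hu : IsUnit s) (x y : A) :
    Mrel (s * x * s) (s * y * s) = Mrel x y := by
  unfold Mrel
  congr 1
  ext β
  change 0 < β ∧ s * x * s ≤ β • (s * y * s) ↔ 0 < β ∧ x ≤ β • y
  rw [← smul_mul_assoc, ← mul_smul_comm, hs.conjugate_le_conjugate_iff hu]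

lemma thompsonDist_conjugate {s : A} (hs : IsSelfAdjoint s) (hu : IsUnit s) (x y : A) :
    thompsonDist (s * x * s) (s * y * s) = thompsonDist x y := by
  rw [thompsonDist, thompsonDist, Mrel_conjugate hs hu, Mrel_conjugate hs hu]

lemma Mrel_one_left [Nontrivial A] {c : A} (hc : IsStrictlyPositive c) :
    Mrel 1 c = (sInf (spectrum ℝ c))⁻¹ := by
  have hK := ContinuousFunctionalCalculus.isCompact_spectrum (R := ℝ) c
  have hne := ContinuousFunctionalCalculus.spectrum_nonempty (R := ℝ) c hc.isSelfAdjoint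
  have hm := hc.spectrum_pos (hK.sInf_mem hne)
  have hset : {β : ℝ | 0 < β ∧ 1 ≤ β • c} = {β : ℝ | 0 < β ∧ (sInf (spectrum ℝ c))⁻¹ ≤ β} := by
    ext β
    refine and_congr_right fun hβ => ?_
    rw [← inv_smul_le_iff_of_pos hβ, ← Algebra.algebraMap_eq_smul_one,
      algebraMap_le_iff_le_spectrum hc.isSelfAdjoint, ← le_csInf_iff hK.bddBelow hne,
      inv_le_comm₀ hβ hm]
  rw [Mrel, hset, sInf_setOf_pos_and_le (inv_pos.2 hm)]

lemma Mrel_one_right [Nontrivial A] {c : A} (hc : IsStrictlyPositive c) :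
    Mrel c 1 = sSup (spectrum ℝ c) := by
  have hK := ContinuousFunctionalCalculus.isCompact_spectrum (R := ℝ) c
  have hne := ContinuousFunctionalCalculus.spectrum_nonempty (R := ℝ) c hc.isSelfAdjoint
  have hset : {β : ℝ | 0 < β ∧ c ≤ β • 1} = {β : ℝ | 0 < β ∧ sSup (spectrum ℝ c) ≤ β} := by
    ext β
    refine and_congr_right fun _ => ?_
    rw [← Algebra.algebraMap_eq_smul_one, le_algebraMap_iff_spectrum_le hc.isSelfAdjoint,
      csSup_le_iff hK.bddAbove hne]
  rw [Mrel, hset, sInf_setOf_pos_and_le (hc.spectrum_pos (hK.sSup_mem hne))]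

lemma norm_cfc_log [Nontrivial A] {c : A} (hc : IsStrictlyPositive c) :
    ‖cfc log c‖ = log (max (sInf (spectrum ℝ c))⁻¹ (sSup (spectrum ℝ c))) := by
  have hlog : ContinuousOn log (spectrum ℝ c) := fun t ht =>
    (continuousAt_log (hc.spectrum_pos ht).ne').continuousWithinAt
  have h := IsGreatest.norm_cfc log c hlog hc.isSelfAdjoint
  simp only [Real.norm_eq_abs] at h
  exact h.unique (isGreatest_image_abs_log (ContinuousFunctionalCalculus.isCompact_spectrum c)
    (ContinuousFunctionalCalculus.spectrum_nonempty c hc.isSelfAdjoint) fun t => hc.spectrum_pos)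

lemma thompsonDist_one_left {c : A} (hc : IsStrictlyPositive c) :
    thompsonDist 1 c = ‖cfc log c‖ := by
  rcases subsingleton_or_nontrivial A with _ | _
  · simp [thompsonDist, Mrel_of_subsingleton, Subsingleton.elim (cfc log c) 0]
  rw [thompsonDist, Mrel_one_left hc, Mrel_one_right hc, norm_cfc_log hc]

end CStarAlgebra

/-- For positive invertible elements `a, b` of a unital C*-algebra, the Thompson
metric satisfies `d_T(a, b) = ‖log (a^{-1/2} b a^{-1/2})‖`. -/
theorem thompson_metric_eq_norm_log
    {A : Type*} [CStarAlgebra A] [PartialOrder A] [StarOrderedRing A]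
    (a b : Aˣ) (ha : 0 ≤ (a : A)) (hb : 0 ≤ (b : A)) :
    thompsonDist (a : A) (b : A)
      = ‖cfc Real.log (invSqrt (a : A) * (b : A) * invSqrt (a : A))‖ := by
  have ha' : IsStrictlyPositive (a : A) := a.isUnit.isStrictlyPositive ha
  have hs := ha'.invSqrt
  have hc : IsStrictlyPositive (invSqrt (a : A) * b * invSqrt (a : A)) :=
    IsStrictlyPositive.conjugate_of_isUnit_of_isSelfAdjoint _ _ hs.isUnit hs.isSelfAdjoint
      (b.isUnit.isStrictlyPositive hb)
  rw [← thompsonDist_conjugate hs.isSelfAdjoint hs.isUnit, invSqrt_mul_self_mul_invSqrt ha',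
    thompsonDist_one_left hc]
end

section
/- Let A be a unital C*-algebra and a, b positive invertible elements of A. Then the spectrum of (b a⁻¹ b)^{-1/2} a (b a⁻¹ b)^{-1/2} equals the set of squares of elements of the spectrum of b^{-1/2} a b^{-1/2}; consequently d_T(b a⁻¹ b, a) = 2 d_T(b, a) for the Thompson metric d_T(x,y) = ‖log(x^{-1/2} y x^{-1/2})‖. -/
/-- The Thompson metric of positive invertible elements, via the formula
`d_T(x,y) = ‖log (x^{-1/2} y x^{-1/2})‖`. -/
noncomputable def thompsonDistLog {A : Type*} [CStarAlgebra A] (x y : A) : ℝ :=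
  ‖cfc Real.log (invSqrt x * y * invSqrt x)‖

lemma IsUnit.spectrum_pow_mul_mul {R A : Type*} [CommSemiring R] [Ring A] [Algebra R A] {s : A}
    (hs : IsUnit s) (y : A) (n : ℕ) :
    spectrum R ((s * y * s) ^ n) = spectrum R ((y * (s * s)) ^ n) := by
  obtain ⟨u, rfl⟩ := hs
  have hconj : (u : A) * y * u = u * (y * (u * u)) * ↑u⁻¹ := by simp [mul_assoc]
  rw [hconj, Units.conj_pow, spectrum.units_conjugate]

section CFC

variable {R A : Type*} {p : A → Prop} [CommSemiring R] [StarRing R] [MetricSpace R]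
  [IsTopologicalSemiring R] [ContinuousStar R] [Ring A] [StarRing A] [TopologicalSpace A]
  [Algebra R A] [ContinuousFunctionalCalculus R A p]

lemma spectrum_pow_eq_image {y : A} (hy : p y) (n : ℕ) :
    spectrum R (y ^ n) = (· ^ n) '' spectrum R y := by
  rw [← cfc_pow_id (R := R) y n hy, cfc_map_spectrum _ _ hy]

end CFC

lemma norm_cfc_eq_of_spectrum_eq {𝕜 A : Type*} {p : A → Prop} [RCLike 𝕜] [NormedRing A]
    [StarRing A] [NormedAlgebra 𝕜 A] [IsometricContinuousFunctionalCalculus 𝕜 A p]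
    (f : 𝕜 → 𝕜) {x y : A} (hxy : spectrum 𝕜 x = spectrum 𝕜 y) (hx : p x) (hy : p y) :
    ‖cfc f x‖ = ‖cfc f y‖ := by
  nontriviality A
  by_cases hf : ContinuousOn f (spectrum 𝕜 x)
  · exact (IsGreatest.norm_cfc f x hf hx).unique (hxy ▸ IsGreatest.norm_cfc f y (hxy ▸ hf) hy)
  · rw [cfc_apply_of_not_continuousOn x hf, cfc_apply_of_not_continuousOn y (hxy ▸ hf)]

section CStarAlgebra

variable {A : Type*} [CStarAlgebra A]

lemma norm_cfc_log_pow {y : A} (hy : IsSelfAdjoint y) (hu : IsUnit y) (n : ℕ) :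
    ‖cfc Real.log (y ^ n)‖ = n * ‖cfc Real.log y‖ := by
  have hlog : ContinuousOn Real.log (spectrum ℝ y) :=
    Real.continuousOn_log.mono fun t ht (h : t = 0) => spectrum.zero_notMem ℝ hu (h ▸ ht)
  have hlog_pow : ContinuousOn Real.log ((· ^ n) '' spectrum ℝ y) := by
    refine Real.continuousOn_log.mono ?_
    rintro _ ⟨t, ht, rfl⟩ (h : t ^ n = 0)
    exact spectrum.zero_notMem ℝ hu ((pow_eq_zero_iff'.mp h).1 ▸ ht)
  rw [← cfc_comp_pow Real.log n y hlog_pow hy]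
  simp only [Real.log_pow]
  rw [cfc_const_mul _ _ y hlog, norm_smul, Real.norm_natCast]

lemma isSelfAdjoint_invSqrt (x : A) : IsSelfAdjoint (invSqrt x) :=
  cfc_predicate _ x

variable [PartialOrder A] [StarOrderedRing A]

lemma invSqrt_mul_invSqrt (x : Aˣ) (hx : 0 ≤ (x : A)) :
    invSqrt (x : A) * invSqrt (x : A) = ((x⁻¹ : Aˣ) : A) := by
  have hpos : ∀ t ∈ spectrum ℝ (x : A), 0 < t :=
    fun t ht => (x.isStrictlyPositive_of_le hx).spectrum_pos ht
  have hcont : ContinuousOn (fun t : ℝ => (Real.sqrt t)⁻¹) (spectrum ℝ (x : A)) :=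
    Real.continuous_sqrt.continuousOn.inv₀ fun t ht => (Real.sqrt_pos.mpr (hpos t ht)).ne'
  rw [invSqrt, ← cfc_mul _ _ _ hcont hcont, ← cfc_inv_id (R := ℝ) x]
  refine cfc_congr fun t ht => ?_
  rw [← mul_inv, Real.mul_self_sqrt (hpos t ht).le]

lemma isUnit_invSqrt (x : Aˣ) (hx : 0 ≤ (x : A)) : IsUnit (invSqrt (x : A)) := by
  rw [← isUnit_pow_iff two_ne_zero, sq, invSqrt_mul_invSqrt x hx]
  exact Units.isUnit _

lemma spectrum_invSqrt_mul_mul_invSqrt_pow (x : Aˣ) (hx : 0 ≤ (x : A)) (y : A) (n : ℕ) :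
    spectrum ℝ ((invSqrt (x : A) * y * invSqrt (x : A)) ^ n)
      = spectrum ℝ ((y * ((x⁻¹ : Aˣ) : A)) ^ n) := by
  rw [(isUnit_invSqrt x hx).spectrum_pow_mul_mul, invSqrt_mul_invSqrt x hx]

end CStarAlgebra

/-- For positive invertible elements `a, b` of a unital C*-algebra, the spectrum of
`(b a⁻¹ b)^{-1/2} a (b a⁻¹ b)^{-1/2}` is the set of squares of elements of the
spectrum of `b^{-1/2} a b^{-1/2}`; consequently `d_T(b a⁻¹ b, a) = 2 d_T(b, a)`. -/
theorem spectrum_square_and_thompson_doubling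
    {A : Type*} [CStarAlgebra A] [PartialOrder A] [StarOrderedRing A]
    (a b : Aˣ) (ha : 0 ≤ (a : A)) (hb : 0 ≤ (b : A)) :
    spectrum ℝ (invSqrt ((b : A) * ((a⁻¹ : Aˣ) : A) * (b : A)) * (a : A) *
        invSqrt ((b : A) * ((a⁻¹ : Aˣ) : A) * (b : A)))
      = (fun t : ℝ => t ^ 2) '' spectrum ℝ (invSqrt (b : A) * (a : A) * invSqrt (b : A)) ∧
    thompsonDistLog ((b : A) * ((a⁻¹ : Aˣ) : A) * (b : A)) (a : A)
      = 2 * thompsonDistLog (b : A) (a : A) := by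
  set c : Aˣ := b * a⁻¹ * b
  have hc : 0 ≤ (c : A) := by
    simpa [c, hb.isSelfAdjoint.star_eq] using
      star_left_conjugate_nonneg (CFC.inv_nonneg_of_nonneg a ha) (b : A)
  have key : a * c⁻¹ = (a * b⁻¹) ^ 2 := by simp only [c, mul_inv_rev, inv_inv, sq, mul_assoc]
  set X := invSqrt (c : A) * a * invSqrt (c : A)
  set Y := invSqrt (b : A) * a * invSqrt (b : A)
  have hY : IsSelfAdjoint Y := ha.isSelfAdjoint.conjugate_self (isSelfAdjoint_invSqrt _)
  have hX : IsSelfAdjoint X := ha.isSelfAdjoint.conjugate_self (isSelfAdjoint_invSqrt _)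
  have hspec : spectrum ℝ X = spectrum ℝ (Y ^ 2) := by
    rw [← pow_one X, spectrum_invSqrt_mul_mul_invSqrt_pow c hc,
      spectrum_invSqrt_mul_mul_invSqrt_pow b hb, pow_one, ← Units.val_mul, key,
      Units.val_pow_eq_pow_val, Units.val_mul]
  refine ⟨hspec.trans (spectrum_pow_eq_image hY 2), ?_⟩
  have hYunit : IsUnit Y := ((isUnit_invSqrt b hb).mul a.isUnit).mul (isUnit_invSqrt b hb)
  change ‖cfc Real.log X‖ = 2 * ‖cfc Real.log Y‖
  rw [norm_cfc_eq_of_spectrum_eq Real.log hspec hX (hY.pow 2), norm_cfc_log_pow hY hYunit 2]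
  norm_num
end

section
/- Let A be a unital C*-algebra and let t ↦ u(t) be a norm-continuous map from ℝ into the unitary group of A with u(0) = 1 and u(s + t) = u(s)·u(t) for all s, t ∈ ℝ. Then there exists a self-adjoint element h ∈ A such that u(t) = exp(i t h) for all t ∈ ℝ. -/
/-!
Averaging a continuous one-parameter group `u` over a short interval gives an invertible
`a = ∫₀^δ u`, and `u t * a = ∫ₜ^(t+δ) u`; hence `u t = (∫ₜ^(t+δ) u) * a⁻¹` is differentiable.
The group law then gives `u' = b * u` with `b = u' 0`, so `u t = exp (t • b)` by uniqueness of
solutions of linear ODEs. For unitaries `star (u t) = u (-t)`; differentiating at `0` gives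
`star b = -b`, so `h = -(I • b)` is self-adjoint.
-/

open NormedSpace Filter Topology

section OneParameterGroup

variable {𝔸 : Type*} [NormedRing 𝔸] [NormedAlgebra ℝ 𝔸] {f : ℝ → 𝔸}

theorem hasDerivAt_of_map_add (hadd : ∀ s t, f (s + t) = f s * f t)
    (hf : DifferentiableAt ℝ f 0) (t : ℝ) : HasDerivAt f (deriv f 0 * f t) t := by
  have h : HasDerivAt (fun s => f (s + t)) (deriv f 0 * f t) 0 := by
    simp_rw [hadd]
    exact hf.hasDerivAt.mul_const (f t)
  have h' : HasDerivAt (fun x => f (x - t + t)) (deriv f 0 * f t) t :=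
    HasDerivAt.comp_sub_const t t (by rwa [sub_self])
  simpa only [sub_add_cancel] using h'

variable [CompleteSpace 𝔸]

theorem exists_ne_zero_isUnit_integral (hf : Continuous f) (hf0 : IsUnit (f 0)) :
    ∃ δ ≠ 0, IsUnit (∫ s in (0 : ℝ)..δ, f s) := by
  have hslope : Tendsto (fun δ : ℝ => δ⁻¹ • ∫ s in (0 : ℝ)..δ, f s) (𝓝[≠] 0) (𝓝 (f 0)) := by
    simpa using (hf.integral_hasStrictDerivAt 0 0).hasDerivAt.tendsto_slope_zero
  obtain ⟨δ, hunit, hδ⟩ :=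
    ((hslope.eventually (Units.nhds hf0.unit)).and self_mem_nhdsWithin).exists
  replace hδ : δ ≠ 0 := hδ
  refine ⟨δ, hδ, ?_⟩
  have h := hunit.smul (Units.mk0 δ hδ)
  rwa [Units.smul_mk0, smul_inv_smul₀ hδ] at h

theorem mul_integral_eq_integral_add_of_map_add (hadd : ∀ s t, f (s + t) = f s * f t)
    {δ : ℝ} (hf : IntervalIntegrable f MeasureTheory.volume 0 δ) (t : ℝ) :
    f t * ∫ s in (0 : ℝ)..δ, f s = ∫ s in t..t + δ, f s := by
  have h := (ContinuousLinearMap.mul ℝ 𝔸 (f t)).intervalIntegral_comp_comm hf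
  simp only [ContinuousLinearMap.mul_apply', ← hadd] at h
  rw [← h]
  simp [intervalIntegral.integral_comp_add_left f t (a := 0) (b := δ)]

theorem differentiable_of_continuous_of_map_add (hadd : ∀ s t, f (s + t) = f s * f t)
    (hf : Continuous f) (hf0 : f 0 = 1) : Differentiable ℝ f := by
  obtain ⟨δ, -, a, ha⟩ := exists_ne_zero_isUnit_integral hf (hf0 ▸ isUnit_one)
  have hfeq : f = fun t => ((∫ s in (0 : ℝ)..t + δ, f s) - ∫ s in (0 : ℝ)..t, f s) * ↑a⁻¹ := by
    ext t
    rw [intervalIntegral.integral_interval_sub_left (hf.intervalIntegrable _ _)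
      (hf.intervalIntegrable _ _),
      ← mul_integral_eq_integral_add_of_map_add hadd (hf.intervalIntegrable _ _), ← ha,
      Units.mul_inv_cancel_right]
  have hF : Differentiable ℝ fun t => ∫ s in (0 : ℝ)..t, f s := fun t =>
    (hf.integral_hasStrictDerivAt 0 t).hasDerivAt.differentiableAt
  rw [hfeq]
  fun_prop

theorem eq_exp_smul_of_hasDerivAt {b : 𝔸} (hf0 : f 0 = 1) (hf : ∀ t, HasDerivAt f (b * f t) t) :
    f = fun t => exp (t • b) :=
  ODE_solution_unique_univ (v := fun _ x => b * x) (s := fun _ => Set.univ) (t₀ := 0)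
    (fun _ => (ContinuousLinearMap.mul ℝ 𝔸 b).lipschitz.lipschitzOnWith)
    (fun t => ⟨hf t, trivial⟩) (fun t => ⟨hasDerivAt_exp_smul_const' b t, trivial⟩) (by simp [hf0])

theorem eq_exp_smul_deriv_of_continuous_of_map_add (hadd : ∀ s t, f (s + t) = f s * f t)
    (hf : Continuous f) (hf0 : f 0 = 1) : f = fun t => exp (t • deriv f 0) :=
  eq_exp_smul_of_hasDerivAt hf0
    (hasDerivAt_of_map_add hadd (differentiable_of_continuous_of_map_add hadd hf hf0 0))

end OneParameterGroup

theorem mem_skewAdjoint_of_hasDerivAt_of_star_eq_comp_neg {E : Type*} [NormedAddCommGroup E]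
    [NormedSpace ℝ E] [StarAddMonoid E] [ContinuousStar E] [StarModule ℝ E] {f : ℝ → E} {b : E}
    (hf : HasDerivAt f b 0) (hstar : ∀ t, star (f t) = f (-t)) : b ∈ skewAdjoint E := by
  have hneg : HasDerivAt (fun t => f (0 - t)) (-b) 0 :=
    HasDerivAt.comp_const_sub 0 0 (by rwa [sub_zero])
  simp only [zero_sub, ← hstar] at hneg
  exact skewAdjoint.mem_iff.mpr (hf.star.unique hneg)

theorem Unitary.star_eq_apply_neg_of_map_add {R : Type*} [Monoid R] [StarMul R]
    {u : ℝ → unitary R} (h0 : u 0 = 1) (hadd : ∀ s t, u (s + t) = u s * u t) (t : ℝ) :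
    star (u t) = u (-t) := by
  rw [Unitary.star_eq_inv, eq_comm, ← mul_eq_one_iff_eq_inv, ← hadd, neg_add_cancel, h0]

/-- Uniformly continuous version of Stone's one-parameter theorem: a norm-continuous
one-parameter group of unitaries in a unital C*-algebra has the form
`u(t) = exp(i t h)` for some self-adjoint `h`. -/
theorem stone_one_parameter_unitary_group
    {A : Type*} [CStarAlgebra A]
    (u : ℝ → unitary A)
    (hcont : Continuous fun t => (u t : A))
    (h0 : u 0 = 1)
    (hadd : ∀ s t : ℝ, u (s + t) = u s * u t) :
    ∃ h : A, IsSelfAdjoint h ∧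
      ∀ t : ℝ, (u t : A) = NormedSpace.exp (((t : ℂ) * Complex.I) • h) := by
  set f : ℝ → A := fun t => u t
  have hf0 : f 0 = 1 := by simp [f, h0]
  have hfadd : ∀ s t, f (s + t) = f s * f t := fun s t => by simp [f, hadd]
  have hskew : deriv f 0 ∈ skewAdjoint A :=
    mem_skewAdjoint_of_hasDerivAt_of_star_eq_comp_neg
      (differentiable_of_continuous_of_map_add hfadd hcont hf0 0).hasDerivAt
      fun t => by simp [f, ← Unitary.coe_star, Unitary.star_eq_apply_neg_of_map_add h0 hadd]
  refine ⟨-(Complex.I • deriv f 0), (IsSelfAdjoint.I_smul_of_mem_skewAdjoint hskew).neg,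
    fun t => ?_⟩
  have hexponent : ((t : ℂ) * Complex.I) • -(Complex.I • deriv f 0) = t • deriv f 0 := by
    rw [smul_neg, smul_smul, mul_assoc, Complex.I_mul_I, ← neg_smul, mul_neg_one, neg_neg,
      Complex.coe_smul]
  rw [hexponent]
  exact congrFun (eq_exp_smul_deriv_of_continuous_of_map_add hfadd hcont hf0) t
end

section
/- Let A be a unital C*-algebra and x, y self-adjoint elements of A. Then lim_{n→∞} n · ‖log( e^{-x/(2n)} e^{y/n} e^{-x/(2n)} )‖ = ‖y − x‖. In particular the Thompson metric satisfies lim_{n→∞} n · d_T(e^{x/n}, e^{y/n}) = ‖x − y‖. -/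
/-!
Put `g t = e^{-t x/2} e^{t y} e^{-t x/2}`, so that `g 0 = 1` and `g' 0 = y - x`. From
`|log s - (s - 1)| ≤ 2 (s - 1)²` for `s ≥ 1/2`, the functional calculus gives
`‖log z - (z - 1)‖ ≤ 2 ‖z - 1‖²` for self-adjoint `z` near `1`; hence `log ∘ g` also has
derivative `y - x` at `0`, i.e. `n log g(1/n) → y - x`. Since `(e^{x/n})^{-1/2} = e^{-x/(2n)}`,
the Thompson distance `d_T(e^{x/n}, e^{y/n})` is exactly `‖log g(1/n)‖`.
-/

open Filter

open Topology Asymptotics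

lemma Real.abs_log_sub_sub_one_le {t : ℝ} (ht : 1 / 2 ≤ t) :
    |Real.log t - (t - 1)| ≤ 2 * (t - 1) ^ 2 := by
  have ht0 : 0 < t := by linarith
  have hup := Real.log_le_sub_one_of_pos ht0
  have hlo := Real.one_sub_inv_le_log_of_pos ht0
  have hgap : (t - 1) - (1 - t⁻¹) ≤ 2 * (t - 1) ^ 2 := by
    have h : (t - 1) - (1 - t⁻¹) = (t - 1) ^ 2 / t := by field_simp
    rw [h, div_le_iff₀ ht0]
    nlinarith [sq_nonneg (t - 1)]
  rw [abs_of_nonpos (by linarith)]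
  linarith

theorem HasDerivAt.tendsto_natCast_smul_inv {E : Type*} [NormedAddCommGroup E] [NormedSpace ℝ E]
    {f : ℝ → E} {v : E} (hf : HasDerivAt f v 0) (h0 : f 0 = 0) :
    Tendsto (fun n : ℕ => (n : ℝ) • f (n : ℝ)⁻¹) atTop (𝓝 v) := by
  have hinv : Tendsto (fun n : ℕ => (n : ℝ)⁻¹) atTop (𝓝[≠] 0) :=
    tendsto_nhdsWithin_of_tendsto_nhds_of_eventually_within _ tendsto_inv_atTop_nhds_zero_nat
      (eventually_ne_atTop 0 |>.mono fun n hn => by simpa using hn)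
  refine (hf.tendsto_slope_zero.comp hinv).congr fun n => ?_
  simp [h0]

theorem hasDerivAt_exp_smul_mul_exp_smul_mul_exp_smul {𝔸 : Type*} [NormedRing 𝔸]
    [NormedAlgebra ℝ 𝔸] [CompleteSpace 𝔸] (a b : 𝔸) :
    HasDerivAt (fun t : ℝ => NormedSpace.exp (t • a) * NormedSpace.exp (t • b) *
      NormedSpace.exp (t • a)) (a + b + a) 0 := by
  have ha := hasDerivAt_exp_smul_const (𝕂 := ℝ) a 0
  have hb := hasDerivAt_exp_smul_const (𝕂 := ℝ) b 0
  simpa [add_mul] using (ha.fun_mul hb).fun_mul ha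

section CStarAlgebra

variable {A : Type*} [CStarAlgebra A]

lemma norm_cfc_log_sub_le {z : A} (hz : IsSelfAdjoint z) (h : ‖z - 1‖ ≤ 1 / 2) :
    ‖cfc Real.log z - (z - 1)‖ ≤ 2 * ‖z - 1‖ ^ 2 := by
  have hsub : cfc (fun t : ℝ => t - 1) z = z - 1 := by
    rw [cfc_sub (fun t : ℝ => t) (fun _ => 1) z, cfc_id' ℝ z, cfc_const_one ℝ z]
  have hdist : ∀ t ∈ spectrum ℝ z, |t - 1| ≤ ‖z - 1‖ := fun t ht => by
    simpa [hsub] using norm_apply_le_norm_cfc (fun t : ℝ => t - 1) z ht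
  have hpos : ∀ t ∈ spectrum ℝ z, 1 / 2 ≤ t := fun t ht => by
    linarith [(abs_le.1 ((hdist t ht).trans h)).1]
  have hlog : ContinuousOn Real.log (spectrum ℝ z) :=
    Real.continuousOn_log.mono fun t ht => (by linarith [hpos t ht] : t ≠ 0)
  have hcfc : cfc Real.log z - (z - 1) = cfc (fun t => Real.log t - (t - 1)) z := by
    rw [cfc_sub Real.log (fun t : ℝ => t - 1) z, hsub]
  rw [hcfc]
  refine norm_cfc_le (by positivity) fun t ht => ?_
  calc ‖Real.log t - (t - 1)‖ ≤ 2 * (t - 1) ^ 2 := Real.abs_log_sub_sub_one_le (hpos t ht)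
    _ ≤ 2 * ‖z - 1‖ ^ 2 := by rw [← sq_abs]; gcongr; exact hdist t ht

theorem HasDerivAt.cfc_log {g : ℝ → A} {v : A} (hg : HasDerivAt g v 0) (hg0 : g 0 = 1)
    (hsa : ∀ t, IsSelfAdjoint (g t)) : HasDerivAt (fun t => cfc Real.log (g t)) v 0 := by
  have hsmall : Tendsto (fun t => g t - 1) (𝓝 0) (𝓝 0) := by
    simpa [hg0] using hg.continuousAt.tendsto.sub_const (1 : A)
  have hlin : (fun t => g t - 1) =O[𝓝 0] fun t => t := by
    simpa [hg0] using hg.isBigO_sub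
  have hsq : (fun t => ‖g t - 1‖ ^ 2) =o[𝓝 0] fun t => t := by
    simpa [sq] using
      hlin.norm_left.mul_isLittleO (isLittleO_one_iff ℝ |>.2 (by simpa using hsmall.norm))
  have hlog : (fun t => cfc Real.log (g t) - (g t - 1)) =O[𝓝 0] fun t => ‖g t - 1‖ ^ 2 := by
    refine IsBigO.of_bound 2 ?_
    filter_upwards [hsmall.norm.eventually (ge_mem_nhds (by norm_num : ‖(0 : A)‖ < 1 / 2))]
      with t ht
    simpa using norm_cfc_log_sub_le (hsa t) ht
  have hrem : HasDerivAt (fun t => cfc Real.log (g t) - (g t - 1)) 0 0 := by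
    rw [hasDerivAt_iff_isLittleO_nhds_zero]
    simpa [hg0] using hlog.trans_isLittleO hsq
  simpa using hrem.fun_add (hg.sub_const 1)

lemma exp_smul_eq_cfc {a : A} (ha : IsSelfAdjoint a) (r : ℝ) :
    NormedSpace.exp (r • a) = cfc (fun t => Real.exp (r * t)) a := by
  rw [← CFC.real_exp_eq_normedSpace_exp, ← cfc_comp_smul r Real.exp a]
  rfl

lemma invSqrt_exp_smul {a : A} (ha : IsSelfAdjoint a) (r : ℝ) :
    invSqrt (NormedSpace.exp (r • a)) = NormedSpace.exp ((-(r / 2)) • a) := by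
  have hsqrt :
      ContinuousOn (fun s : ℝ => (√s)⁻¹) ((fun t => Real.exp (r * t)) '' spectrum ℝ a) :=
    Real.continuous_sqrt.continuousOn.inv₀ fun _ ⟨_, _, hs⟩ =>
      hs ▸ (Real.sqrt_pos.2 (Real.exp_pos _)).ne'
  rw [invSqrt, exp_smul_eq_cfc ha, exp_smul_eq_cfc ha, ← cfc_comp' _ _ a hsqrt]
  refine cfc_congr fun t _ => ?_
  rw [← Real.exp_half, ← Real.exp_neg]
  ring_nf

end CStarAlgebra

theorem thompson_metric_lie_trotter_asymptotics_general
    {A : Type*} [CStarAlgebra A]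
    (x y : A) (hx : IsSelfAdjoint x) (hy : IsSelfAdjoint y) :
    Tendsto (fun n : ℕ => (n : ℝ) *
        ‖cfc Real.log (NormedSpace.exp ((-(1 / (2 * (n : ℝ)))) • x) *
          NormedSpace.exp (((n : ℝ)⁻¹) • y) *
          NormedSpace.exp ((-(1 / (2 * (n : ℝ)))) • x))‖)
      atTop (nhds ‖y - x‖) ∧
    Tendsto (fun n : ℕ => (n : ℝ) *
        thompsonDistLog (NormedSpace.exp (((n : ℝ)⁻¹) • x))
          (NormedSpace.exp (((n : ℝ)⁻¹) • y)))
      atTop (nhds ‖x - y‖) := by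
  set g : ℝ → A := fun t => NormedSpace.exp ((-(t / 2)) • x) * NormedSpace.exp (t • y) *
    NormedSpace.exp ((-(t / 2)) • x)
  have hg : HasDerivAt g (y - x) 0 := by
    convert hasDerivAt_exp_smul_mul_exp_smul_mul_exp_smul ((-(1 / 2 : ℝ)) • x) y using 1
    · ext t
      simp only [g, smul_smul]
      ring_nf
    · module
  have hsa : ∀ t, IsSelfAdjoint (g t) := fun t =>
    (IsSelfAdjoint.all t |>.smul hy).exp.conjugate_self (IsSelfAdjoint.all _ |>.smul hx).exp
  have hlim : Tendsto (fun n : ℕ => (n : ℝ) * ‖cfc Real.log (g (n : ℝ)⁻¹)‖) atTop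
      (𝓝 ‖y - x‖) := by
    simpa [norm_smul] using
      ((hg.cfc_log (by simp [g]) hsa).tendsto_natCast_smul_inv (by simp [g])).norm
  have hhalf : ∀ n : ℕ, -(1 / (2 * (n : ℝ))) = -((n : ℝ)⁻¹ / 2) := fun n => by ring
  constructor
  · simp only [hhalf]
    exact hlim
  · rw [norm_sub_rev]
    refine hlim.congr fun n => ?_
    rw [thompsonDistLog, invSqrt_exp_smul hx]

/-- Lie–Trotter-type asymptotics: for self-adjoint `x, y` in a unital C*-algebra,
`n‖log(e^{-x/2n} e^{y/n} e^{-x/2n})‖ → ‖y − x‖`; in particular the Thompson metric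
satisfies `n · d_T(e^{x/n}, e^{y/n}) → ‖x − y‖`. -/
theorem thompson_metric_lie_trotter_asymptotics
    {A : Type*} [CStarAlgebra A] [PartialOrder A] [StarOrderedRing A]
    (x y : A) (hx : IsSelfAdjoint x) (hy : IsSelfAdjoint y) :
    Tendsto (fun n : ℕ => (n : ℝ) *
        ‖cfc Real.log (NormedSpace.exp ((-(1 / (2 * (n : ℝ)))) • x) *
          NormedSpace.exp (((n : ℝ)⁻¹) • y) *
          NormedSpace.exp ((-(1 / (2 * (n : ℝ)))) • x))‖)
      atTop (nhds ‖y - x‖) ∧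
    Tendsto (fun n : ℕ => (n : ℝ) *
        thompsonDistLog (NormedSpace.exp (((n : ℝ)⁻¹) • x))
          (NormedSpace.exp (((n : ℝ)⁻¹) • y)))
      atTop (nhds ‖x - y‖) :=
  thompson_metric_lie_trotter_asymptotics_general x y hx hy
end
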